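/- Uniqueness part: if h₁ and h₂ are Puiseux series both satisfying q·(G ∘ hᵢ) = hᵢ'·G with the same initial term c·x^q (c ≠ 0, q > 0), where G has valuation 1, then h₁ = h₂. -/

import Mathlib

open HahnSeries

noncomputable section

abbrev Khat := HahnSeries ℚ ℂ

/-- A Hahn series is a Puiseux series if its support lies in `(1/d)ℤ` for some `d ≥ 1`. -/
def IsPuiseux (f : Khat) : Prop :=
  ∃ d : ℕ, 0 < d ∧ ∀ q ∈ f.support, ∃ n : ℤ, q = (n : ℚ) / d

/-- Formal derivative of a Hahn/Puiseux series. -/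
def D (f : Khat) : Khat where
  coeff q := ((q + 1 : ℚ) : ℂ) * f.coeff (q + 1)
  isPWO_support' := by
    have hsub : (Function.support fun q : ℚ => ((q + 1 : ℚ) : ℂ) * f.coeff (q + 1)) ⊆
        (fun q : ℚ => q - 1) '' f.support := by
      intro q hq
      have : f.coeff (q + 1) ≠ 0 := by
        intro h0
        apply hq
        simp [h0]
      exact ⟨q + 1, this, by ring⟩
    exact (Set.IsPWO.image_of_monotone f.isPWO_support
      (fun a b hab => by simpa using sub_le_sub_right hab 1)).mono hsub

/-- Formal integral of a Hahn/Puiseux series (dropping any `x⁻¹` term). -/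
def integ (f : Khat) : Khat where
  coeff q := if q = 0 then 0 else f.coeff (q - 1) / ((q : ℚ) : ℂ)
  isPWO_support' := by
    have hsub : (Function.support fun q : ℚ => if q = 0 then 0 else f.coeff (q - 1) / ((q : ℚ) : ℂ)) ⊆
        (fun q : ℚ => q + 1) '' f.support := by
      intro q hq
      simp only [Function.mem_support] at hq
      by_cases h0 : q = 0
      · simp [h0] at hq
      · have : f.coeff (q - 1) ≠ 0 := by
          intro h; simp [h0, h] at hq
        exact ⟨q - 1, this, by ring⟩
    exact (Set.IsPWO.image_of_monotone f.isPWO_support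
      (fun a b hab => by simpa using add_le_add_right hab 1)).mono hsub

/-- Composition `F ∘ h` of a power series `F` with a Hahn series `h` of positive order. -/
def hcomp (F : PowerSeries ℂ) (h : Khat) : Khat :=
  if hh : 0 < h.orderTop then
    HahnSeries.SummableFamily.hsum
      { toFun := fun n => (PowerSeries.coeff n F) • h ^ n
        isPWO_iUnion_support' := by
          refine ((HahnSeries.SummableFamily.powers h).isPWO_iUnion_support).mono ?_
          refine Set.iUnion_mono fun n => ?_
          intro q hq
          simp only [HahnSeries.mem_support, HahnSeries.coeff_smul] at hq ⊢
          intro h0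
          simp only [HahnSeries.SummableFamily.powers_of_orderTop_pos hh] at h0
          exact hq (by rw [h0, smul_zero])
        finite_co_support' := fun g => by
          refine ((HahnSeries.SummableFamily.powers h).finite_co_support g).subset ?_
          intro n hn
          simp only [Set.mem_setOf_eq, HahnSeries.coeff_smul, ne_eq] at hn ⊢
          intro h0
          simp only [HahnSeries.SummableFamily.powers_of_orderTop_pos hh] at h0
          exact hn (by rw [h0, smul_zero]) }
  else 0

/-- The embedding of power series into Hahn series over `ℚ`. -/
def ofPS : PowerSeries ℂ →+* Khat := HahnSeries.ofPowerSeries ℚ ℂ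

/-- Logarithmic derivative. -/
def ld (u : Khat) : Khat := D u / u

end


/-! Suppose `h₁ ≠ h₂` and let `r = v(h₁ - h₂)`; then `r > q`. Compare the coefficients of `x^r`
in the difference of the two equations. Both `hᵢ` have valuation `≥ q > 0`, so
`v(h₁ⁿ - h₂ⁿ) ≥ (n - 1)q + r` and only the linear term `g₁x` of `G` contributes to
`q(G∘h₁ - G∘h₂)` at `x^r`, giving `q g₁ e_r` with `e_r` the leading coefficient of `h₁ - h₂`.
On the other side `v(G) = 1`, so `(h₁ - h₂)'G` has coefficient `r e_r g₁` there. Hence `q = r`. -/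

namespace HahnSeries

variable {Γ R : Type*}

theorem le_orderTop_of_lt_orderTop_sub_single [LinearOrder Γ] [AddGroup R]
    {x : HahnSeries Γ R} {a : Γ} {c : R} (h : (a : WithTop Γ) < (x - single a c).orderTop) :
    (a : WithTop Γ) ≤ x.orderTop := by
  rw [← sub_add_cancel x (single a c)]
  exact le_min h.le orderTop_single_le |>.trans min_orderTop_le_orderTop_add

section OrderedCancelAddMonoid

variable [AddCommMonoid Γ] [LinearOrder Γ] [IsOrderedCancelAddMonoid Γ]

theorem coeff_mul_add_of_le_orderTop [NonUnitalNonAssocSemiring R] {x y : HahnSeries Γ R}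
    {a b : Γ} (ha : (a : WithTop Γ) ≤ x.orderTop) (hb : (b : WithTop Γ) ≤ y.orderTop) :
    (x * y).coeff (a + b) = x.coeff a * y.coeff b := by
  rcases ha.lt_or_eq with ha | ha
  · rw [coeff_eq_zero_of_lt_orderTop ha, zero_mul]
    refine coeff_eq_zero_of_lt_orderTop (lt_of_lt_of_le ?_ orderTop_add_le_mul)
    exact WithTop.add_lt_add_of_lt_of_le WithTop.coe_ne_top ha hb
  rcases hb.lt_or_eq with hb | hb
  · rw [coeff_eq_zero_of_lt_orderTop hb, mul_zero]
    refine coeff_eq_zero_of_lt_orderTop (lt_of_lt_of_le ?_ orderTop_add_le_mul)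
    exact WithTop.add_lt_add_of_le_of_lt WithTop.coe_ne_top ha.le hb
  have hx : x ≠ 0 := orderTop_ne_top.1 (ha ▸ WithTop.coe_ne_top)
  have hy : y ≠ 0 := orderTop_ne_top.1 (hb ▸ WithTop.coe_ne_top)
  rw [← order_eq_orderTop_of_ne_zero hx, WithTop.coe_eq_coe] at ha
  rw [← order_eq_orderTop_of_ne_zero hy, WithTop.coe_eq_coe] at hb
  rw [ha, hb, coeff_mul_order_add_order, leadingCoeff_eq, leadingCoeff_eq]

theorem le_orderTop_pow_succ_sub_pow_succ [CommRing R] {x y : HahnSeries Γ R} {a : WithTop Γ}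
    (hx : a ≤ x.orderTop) (hy : a ≤ y.orderTop) (n : ℕ) :
    n • a + (x - y).orderTop ≤ (x ^ (n + 1) - y ^ (n + 1)).orderTop := by
  induction n with
  | zero => simp
  | succ n ih =>
    have hsplit : x ^ (n + 2) - y ^ (n + 2) =
        x ^ (n + 1) * (x - y) + (x ^ (n + 1) - y ^ (n + 1)) * y := by ring
    rw [hsplit]
    refine le_trans (le_min ?_ ?_) min_orderTop_le_orderTop_add
    · calc (n + 1) • a + (x - y).orderTop ≤ (x ^ (n + 1)).orderTop + (x - y).orderTop := by
            gcongr
            exact (nsmul_le_nsmul_right hx _).trans orderTop_nsmul_le_orderTop_pow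
        _ ≤ _ := orderTop_add_le_mul
    · calc (n + 1) • a + (x - y).orderTop = n • a + (x - y).orderTop + a := by
            rw [succ_nsmul]; ac_rfl
        _ ≤ (x ^ (n + 1) - y ^ (n + 1)).orderTop + y.orderTop := by gcongr
        _ ≤ _ := orderTop_add_le_mul

end OrderedCancelAddMonoid

end HahnSeries

theorem coeff_D (f : Khat) (s : ℚ) : (D f).coeff s = ((s + 1 : ℚ) : ℂ) * f.coeff (s + 1) := rfl

theorem D_sub (f g : Khat) : D (f - g) = D f - D g := by
  ext s
  simp only [coeff_D, coeff_sub, mul_sub]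

theorem le_orderTop_D {f : Khat} {a : ℚ} (h : (a : WithTop ℚ) ≤ f.orderTop) :
    ((a - 1 : ℚ) : WithTop ℚ) ≤ (D f).orderTop := by
  rw [le_orderTop_iff_forall] at h ⊢
  intro s hs
  have hs : s + 1 < a := by linarith [WithTop.coe_lt_coe.1 hs]
  rw [coeff_D, h (s + 1) (WithTop.coe_lt_coe.2 hs), mul_zero]

theorem coeff_ofPS_one (G : PowerSeries ℂ) : (ofPS G).coeff 1 = PowerSeries.coeff 1 G := by
  exact_mod_cast ofPowerSeries_apply_coeff G 1

theorem one_le_orderTop_ofPS {G : PowerSeries ℂ} (hG0 : PowerSeries.coeff 0 G = 0) :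
    ((1 : ℚ) : WithTop ℚ) ≤ (ofPS G).orderTop := by
  rw [le_orderTop_iff_forall]
  intro s hs
  rw [ofPS, ofPowerSeries_apply, embDomain_notin_image_support]
  rintro ⟨n, hn, rfl⟩
  rw [Nat.castOrderEmbedding_apply, WithTop.coe_lt_coe, Nat.cast_lt_one] at hs
  obtain rfl : n = 0 := hs
  exact hn hG0

theorem coeff_D_mul_ofPS {f : Khat} {r : ℚ} (hf : (r : WithTop ℚ) ≤ f.orderTop)
    {G : PowerSeries ℂ} (hG0 : PowerSeries.coeff 0 G = 0) :
    (D f * ofPS G).coeff r = r * f.coeff r * PowerSeries.coeff 1 G := by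
  have h := coeff_mul_add_of_le_orderTop (le_orderTop_D hf) (one_le_orderTop_ofPS hG0)
  rw [sub_add_cancel] at h
  rw [h, coeff_D, sub_add_cancel, coeff_ofPS_one]

theorem coeff_hcomp_sub_hcomp (F : PowerSeries ℂ) {h₁ h₂ : Khat} {a r : ℚ} (ha : 0 < a)
    (h₁a : (a : WithTop ℚ) ≤ h₁.orderTop) (h₂a : (a : WithTop ℚ) ≤ h₂.orderTop)
    (hr : (r : WithTop ℚ) ≤ (h₁ - h₂).orderTop) :
    (hcomp F h₁ - hcomp F h₂).coeff r = PowerSeries.coeff 1 F * (h₁ - h₂).coeff r := by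
  have hpos : (0 : WithTop ℚ) < a := WithTop.coe_lt_coe.2 ha
  unfold hcomp
  rw [dif_pos (hpos.trans_le h₁a), dif_pos (hpos.trans_le h₂a), ← SummableFamily.hsum_sub,
    SummableFamily.coeff_hsum, finsum_eq_single _ 1]
  · show (PowerSeries.coeff 1 F • h₁ ^ 1 - PowerSeries.coeff 1 F • h₂ ^ 1).coeff r = _
    rw [coeff_sub, coeff_smul, coeff_smul, pow_one, pow_one, smul_eq_mul, smul_eq_mul, ← mul_sub,
      coeff_sub]
  intro n hn
  show (PowerSeries.coeff n F • h₁ ^ n - PowerSeries.coeff n F • h₂ ^ n).coeff r = 0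
  rw [coeff_sub, coeff_smul, coeff_smul, smul_eq_mul, smul_eq_mul, ← mul_sub, ← coeff_sub]
  rcases n with _ | _ | m
  · simp
  · contradiction
  rw [coeff_eq_zero_of_lt_orderTop, mul_zero]
  refine lt_of_lt_of_le ?_ (le_orderTop_pow_succ_sub_pow_succ h₁a h₂a (m + 1))
  rw [← WithTop.coe_nsmul]
  simpa using WithTop.add_lt_add_of_lt_of_le WithTop.coe_ne_top
    (WithTop.coe_lt_coe.2 (nsmul_pos ha m.succ_ne_zero)) hr

theorem puiseux_solution_unique_general (G : PowerSeries ℂ)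
    (hG0 : PowerSeries.coeff 0 G = 0) (hG1 : PowerSeries.coeff 1 G ≠ 0)
    (q : ℚ) (hq : 0 < q) (c : ℂ) (h₁ h₂ : Khat)
    (hinit₁ : (q : WithTop ℚ) < (h₁ - HahnSeries.single q c).orderTop)
    (hinit₂ : (q : WithTop ℚ) < (h₂ - HahnSeries.single q c).orderTop)
    (heq₁ : (q : ℂ) • hcomp G h₁ = D h₁ * ofPS G)
    (heq₂ : (q : ℂ) • hcomp G h₂ = D h₂ * ofPS G) :
    h₁ = h₂ := by
  by_contra hne
  have he : h₁ - h₂ ≠ 0 := sub_ne_zero.mpr hne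
  set r := (h₁ - h₂).order
  have hr : (r : WithTop ℚ) = (h₁ - h₂).orderTop := order_eq_orderTop_of_ne_zero he
  have hqr : q < r := by
    have h := (lt_min hinit₁ hinit₂).trans_le min_orderTop_le_orderTop_sub
    rw [sub_sub_sub_cancel_right, ← hr] at h
    exact WithTop.coe_lt_coe.1 h
  have hcoeff : (q : ℂ) * (PowerSeries.coeff 1 G * (h₁ - h₂).coeff r) =
      r * (h₁ - h₂).coeff r * PowerSeries.coeff 1 G := by
    rw [← coeff_hcomp_sub_hcomp G hq (le_orderTop_of_lt_orderTop_sub_single hinit₁)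
      (le_orderTop_of_lt_orderTop_sub_single hinit₂) hr.le, ← coeff_D_mul_ofPS hr.le hG0, D_sub,
      sub_mul, ← heq₁, ← heq₂, coeff_sub, coeff_sub, coeff_smul, coeff_smul, smul_eq_mul,
      smul_eq_mul, mul_sub]
  have hq_eq_r : (q : ℂ) = r :=
    mul_right_cancel₀ (b := PowerSeries.coeff 1 G * (h₁ - h₂).coeff r)
      (mul_ne_zero hG1 (mt coeff_order_eq_zero.1 he)) (by linear_combination hcoeff)
  exact hqr.ne (by exact_mod_cast hq_eq_r)

/-- uniqueness — two Puiseux solutions of `q·(G∘h) = h'·G` with the same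
initial term `c·x^q` (i.e. `v(h - c·x^q) > q`) coincide. -/
theorem puiseux_solution_unique (G : PowerSeries ℂ)
    (hG0 : PowerSeries.coeff 0 G = 0) (hG1 : PowerSeries.coeff 1 G ≠ 0)
    (q : ℚ) (hq : 0 < q) (c : ℂ) (hc : c ≠ 0) (h₁ h₂ : Khat)
    (hp₁ : IsPuiseux h₁) (hp₂ : IsPuiseux h₂)
    (hinit₁ : (q : WithTop ℚ) < (h₁ - HahnSeries.single q c).orderTop)
    (hinit₂ : (q : WithTop ℚ) < (h₂ - HahnSeries.single q c).orderTop)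
    (heq₁ : (q : ℂ) • hcomp G h₁ = D h₁ * ofPS G)
    (heq₂ : (q : ℂ) • hcomp G h₂ = D h₂ * ofPS G) :
    h₁ = h₂ :=
  puiseux_solution_unique_general G hG0 hG1 q hq c h₁ h₂ hinit₁ hinit₂ heq₁ heq₂
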